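/- For every ultrafilter U on ℕ, the upper cone C_fe(U) = {V ∈ βℕ : U ⊴_fe V} is a closed subset of βℕ in the Stone topology, and it is a two-sided ideal of (βℕ, ⊕). -/
import Mathlib


/-- `A ≤_fe B`: every finite subset of `A` has a translate contained in `B`. -/
def fe (A B : Set ℕ) : Prop :=
  ∀ F : Finset ℕ, ↑F ⊆ A → ∃ n : ℕ, ∀ a ∈ F, n + a ∈ B

/-- The sum of ultrafilters on ℕ: `A ∈ usum U V ↔ {n | {m | n + m ∈ A} ∈ V} ∈ U`. -/
def usum (U V : Ultrafilter ℕ) : Ultrafilter ℕ :=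
  U.bind fun n => V.map fun m => n + m

/-- Finite embeddability of ultrafilters: `U ⊴_fe V` iff every `B ∈ V`
contains a finitely embedded `A ∈ U`. -/
def ufe (U V : Ultrafilter ℕ) : Prop := ∀ B ∈ V, ∃ A ∈ U, fe A B

lemma mem_usum {U V : Ultrafilter ℕ} {B : Set ℕ} :
    B ∈ usum U V ↔ {n | {m | n + m ∈ B} ∈ V} ∈ U := Iff.rfl

/-- The upper cone `C_fe(U) = {V | U ⊴_fe V}` is closed in the Stone topology
and is a two-sided ideal of `(βℕ, ⊕)`. -/
theorem stmt9 (U : Ultrafilter ℕ) :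
    IsClosed {V : Ultrafilter ℕ | ufe U V} ∧
    (∀ V ∈ {V : Ultrafilter ℕ | ufe U V}, ∀ W : Ultrafilter ℕ,
      usum V W ∈ {V : Ultrafilter ℕ | ufe U V} ∧
      usum W V ∈ {V : Ultrafilter ℕ | ufe U V}) := by
  constructor
  · have h : {V : Ultrafilter ℕ | ufe U V} =
        ⋂ B ∈ {B : Set ℕ | ¬ ∃ A ∈ U, fe A B}, {V : Ultrafilter ℕ | B ∈ V}ᶜ := by
      ext V
      simp only [Set.mem_iInter, Set.mem_setOf_eq, Set.mem_compl_iff]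
      constructor
      · intro h B hB hBV
        exact hB (h B hBV)
      · intro h B hBV
        by_contra hc
        exact h B hc hBV
    rw [h]
    exact isClosed_biInter fun B _ => (ultrafilter_isOpen_basic B).isClosed_compl
  · intro V hV W
    constructor
    · intro B hB
      rw [mem_usum] at hB
      obtain ⟨A, hA, hfe⟩ := hV _ hB
      refine ⟨A, hA, fun F hF => ?_⟩
      obtain ⟨n, hn⟩ := hfe F hF
      have hW : (⋂ a ∈ F, {m | n + a + m ∈ B}) ∈ W :=
        (Filter.biInter_finset_mem F).2 fun a ha => hn a ha
      obtain ⟨m, hm⟩ := Filter.nonempty_of_mem hW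
      refine ⟨n + m, fun a ha => ?_⟩
      have := Set.mem_iInter₂.1 hm a ha
      have e : n + a + m = n + m + a := by ring
      simpa [e] using this
    · intro B hB
      rw [mem_usum] at hB
      obtain ⟨n, hn⟩ := Filter.nonempty_of_mem hB
      obtain ⟨A, hA, hfe⟩ := hV _ hn
      refine ⟨A, hA, fun F hF => ?_⟩
      obtain ⟨k, hk⟩ := hfe F hF
      refine ⟨n + k, fun a ha => ?_⟩
      have := hk a ha
      have e : n + (k + a) = n + k + a := by ring
      simpa [e] using this
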